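/- arXiv:0812.1641 — 3 statements merged into one kernel-verified Lean document; each statement's English description precedes it below -/
import Mathlib

section
/- Let (X, d) be a metric space with asdim(X, d) ≤ n. Then there exist a sequence of uniformly bounded coverings {𝒰_k}_{k=1}^∞ of X and an increasing sequence of positive real numbers {d_k}_{k=1}^∞ such that: (1) for every k, 𝒰_k = ⋃_{i=1}^{n+1} 𝒰_k^i and each family 𝒰_k^i is d_k-disjoint; (2) the Lebesgue number of 𝒰_k is at least d_k; (3) d_{k+1} > 2·m_k, where m_k = mesh(𝒰_k); (4) for every i, k, l with k < l and every U ∈ 𝒰_k^i and V ∈ 𝒰_l^i, if U ∩ V ≠ ∅ then U ⊆ V. -/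
/-- The distance between two subsets of a metric space:
`d(A, B) = inf {d(a, b) : a ∈ A, b ∈ B}`. -/
noncomputable def setDist {X : Type*} [MetricSpace X] (A B : Set X) : ℝ :=
  sInf {r : ℝ | ∃ a ∈ A, ∃ b ∈ B, dist a b = r}

/-- A family `𝒰` of subsets is `r`-disjoint if any two distinct members `U, V`
satisfy `d(U, V) > r`. -/
def RDisjoint {X : Type*} [MetricSpace X] (r : ℝ) (𝒰 : Set (Set X)) : Prop :=
  ∀ U ∈ 𝒰, ∀ V ∈ 𝒰, U ≠ V → r < setDist U V

/-- A family of subsets covers `X`. -/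
def IsCover {X : Type*} (𝒰 : Set (Set X)) : Prop :=
  ∀ x : X, ∃ U ∈ 𝒰, x ∈ U

/-- A covering has Lebesgue number at least `r` if every open ball of radius `r`
is contained in some member of the covering. -/
def LebesgueGE {X : Type*} [MetricSpace X] (𝒰 : Set (Set X)) (r : ℝ) : Prop :=
  ∀ x : X, ∃ U ∈ 𝒰, Metric.ball x r ⊆ U

/-- A family is uniformly bounded if the diameters of its members have a common bound. -/
def UnifBounded {X : Type*} [MetricSpace X] (𝒰 : Set (Set X)) : Prop :=
  ∃ M : ℝ, ∀ U ∈ 𝒰, ∀ x ∈ U, ∀ y ∈ U, dist x y ≤ M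

/-- `asdim(X, d) ≤ n`: for every `r > 0` there is a uniformly bounded covering of `X`
splitting into `n + 1` families, each of which is `r`-disjoint. -/
def AsdimLE (n : ℕ) (X : Type*) [MetricSpace X] : Prop :=
  ∀ r : ℝ, 0 < r → ∃ 𝒰 : Fin (n + 1) → Set (Set X),
    IsCover (⋃ i, 𝒰 i) ∧ UnifBounded (⋃ i, 𝒰 i) ∧ ∀ i, RDisjoint r (𝒰 i)

set_option linter.unusedSectionVars false

section Aux

variable {X : Type*} [MetricSpace X]

theorem setDist_le_dist {A B : Set X} {a b : X} (ha : a ∈ A) (hb : b ∈ B) :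
    setDist A B ≤ dist a b := by
  apply csInf_le
  · exact ⟨0, by rintro r ⟨x, _, y, _, rfl⟩; exact dist_nonneg⟩
  · exact ⟨a, ha, b, hb, rfl⟩

theorem le_setDist {A B : Set X} {c : ℝ} (hA : A.Nonempty) (hB : B.Nonempty)
    (hc : ∀ a ∈ A, ∀ b ∈ B, c ≤ dist a b) : c ≤ setDist A B := by
  apply le_csInf
  · obtain ⟨a, ha⟩ := hA; obtain ⟨b, hb⟩ := hB; exact ⟨dist a b, a, ha, b, hb, rfl⟩
  · rintro r ⟨a, ha, b, hb, rfl⟩; exact hc a ha b hb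

noncomputable def famOf (n : ℕ) (h : AsdimLE n X) (r : ℝ) : Fin (n + 1) → Set (Set X) :=
  if hr : 0 < r then (h r hr).choose else fun _ => ∅

theorem famOf_spec (n : ℕ) (h : AsdimLE n X) {r : ℝ} (hr : 0 < r) :
    IsCover (⋃ i, famOf n h r i) ∧ UnifBounded (⋃ i, famOf n h r i) ∧
      ∀ i, RDisjoint r (famOf n h r i) := by
  simp only [famOf, dif_pos hr]
  exact (h r hr).choose_spec

noncomputable def meshOf (n : ℕ) (h : AsdimLE n X) (r : ℝ) : ℝ :=
  if hr : 0 < r then (famOf_spec n h hr).2.1.choose else 0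

theorem meshOf_spec (n : ℕ) (h : AsdimLE n X) {r : ℝ} (hr : 0 < r) :
    ∀ U ∈ ⋃ i, famOf n h r i, ∀ x ∈ U, ∀ y ∈ U, dist x y ≤ meshOf n h r := by
  rw [meshOf, dif_pos hr]
  exact (famOf_spec n h hr).2.1.choose_spec

end Aux

set_option linter.unusedSectionVars false

section Build

variable {X : Type*} [MetricSpace X] {n : ℕ}

noncomputable def bM (prev : ℕ → (Fin (n + 1) → Set (Set X)) × ℝ × ℝ) (l : ℕ) : ℝ :=
  ∑ k ∈ Finset.range l, |(prev k).2.2|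

noncomputable def bD (prev : ℕ → (Fin (n + 1) → Set (Set X)) × ℝ × ℝ) (l : ℕ) : ℝ :=
  ∑ k ∈ Finset.range l, |(prev k).2.1|

noncomputable def bd (prev : ℕ → (Fin (n + 1) → Set (Set X)) × ℝ × ℝ) (l : ℕ) : ℝ :=
  bD prev l + 2 * bM prev l + 1

noncomputable def br (prev : ℕ → (Fin (n + 1) → Set (Set X)) × ℝ × ℝ) (l : ℕ) : ℝ :=
  3 * bd prev l + 2 * bM prev l + 1

noncomputable def bW (prev : ℕ → (Fin (n + 1) → Set (Set X)) × ℝ × ℝ) (l : ℕ)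
    (V : Set X) : Set X :=
  ⋃ v ∈ V, Metric.ball v (bd prev l)

noncomputable def bF (prev : ℕ → (Fin (n + 1) → Set (Set X)) × ℝ × ℝ) (l : ℕ)
    (i : Fin (n + 1)) (V : Set X) : Set X :=
  bW prev l V ∪ ⋃₀ {U | (∃ k < l, U ∈ (prev k).1 i) ∧ (U ∩ bW prev l V).Nonempty}

noncomputable def bfam (h : AsdimLE n X)
    (prev : ℕ → (Fin (n + 1) → Set (Set X)) × ℝ × ℝ) (l : ℕ) (i : Fin (n + 1)) :
    Set (Set X) :=
  bF prev l i '' {V | V ∈ famOf n h (br prev l) i ∧ V.Nonempty}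

noncomputable def bm (h : AsdimLE n X)
    (prev : ℕ → (Fin (n + 1) → Set (Set X)) × ℝ × ℝ) (l : ℕ) : ℝ :=
  meshOf n h (br prev l) + 2 * (bd prev l + bM prev l)

noncomputable def build (h : AsdimLE n X)
    (prev : ℕ → (Fin (n + 1) → Set (Set X)) × ℝ × ℝ) (l : ℕ) :
    (Fin (n + 1) → Set (Set X)) × ℝ × ℝ :=
  (bfam h prev l, bd prev l, bm h prev l)

variable (prev : ℕ → (Fin (n + 1) → Set (Set X)) × ℝ × ℝ) (l : ℕ)

theorem bM_nonneg : 0 ≤ bM prev l := Finset.sum_nonneg fun _ _ => abs_nonneg _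

theorem bD_nonneg : 0 ≤ bD prev l := Finset.sum_nonneg fun _ _ => abs_nonneg _

theorem bd_pos : 0 < bd prev l := by
  have := bM_nonneg prev l; have := bD_nonneg prev l
  unfold bd; linarith

theorem br_pos : 0 < br prev l := by
  have := bM_nonneg prev l; have := bd_pos prev l
  unfold br; linarith

theorem le_bM {k : ℕ} (hk : k < l) : (prev k).2.2 ≤ bM prev l := by
  unfold bM
  exact le_trans (le_abs_self _)
    (Finset.single_le_sum (f := fun k => |(prev k).2.2|) (fun _ _ => abs_nonneg _)
      (Finset.mem_range.mpr hk))

theorem le_bD {k : ℕ} (hk : k < l) : (prev k).2.1 ≤ bD prev l := by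
  unfold bD
  exact le_trans (le_abs_self _)
    (Finset.single_le_sum (f := fun k => |(prev k).2.1|) (fun _ _ => abs_nonneg _)
      (Finset.mem_range.mpr hk))

theorem subset_bW (V : Set X) : V ⊆ bW prev l V := fun v hv =>
  Set.mem_biUnion hv (Metric.mem_ball_self (bd_pos prev l))

theorem absorb_subset_bF (i : Fin (n + 1)) (V U : Set X)
    (hU : ∃ k < l, U ∈ (prev k).1 i) (hint : (U ∩ bW prev l V).Nonempty) :
    U ⊆ bF prev l i V := by
  have hmem : U ∈ {U | (∃ k < l, U ∈ (prev k).1 i) ∧ (U ∩ bW prev l V).Nonempty} :=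
    ⟨hU, hint⟩
  exact Set.subset_union_of_subset_right (Set.subset_sUnion_of_mem hmem) _

theorem subset_bF (i : Fin (n + 1)) (V : Set X) : V ⊆ bF prev l i V :=
  (subset_bW prev l V).trans Set.subset_union_left

theorem build_lebesgue (h : AsdimLE n X) :
    LebesgueGE (⋃ i, bfam h prev l i) (bd prev l) := by
  intro x
  obtain ⟨U, hU, hxU⟩ := (famOf_spec n h (br_pos prev l)).1 x
  rw [Set.mem_iUnion] at hU
  obtain ⟨i, hUi⟩ := hU
  refine ⟨bF prev l i U, Set.mem_iUnion.mpr ⟨i, ⟨U, ⟨hUi, ⟨x, hxU⟩⟩, rfl⟩⟩, ?_⟩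
  intro y hy
  exact Set.subset_union_left (Set.mem_biUnion hxU hy)

theorem build_close (h : AsdimLE n X)
    (Hm : ∀ k < l, ∀ i : Fin (n + 1), ∀ U ∈ (prev k).1 i, ∀ x ∈ U, ∀ y ∈ U,
      dist x y ≤ (prev k).2.2)
    (i : Fin (n + 1)) (V : Set X) {a : X} (ha : a ∈ bF prev l i V) :
    ∃ v ∈ V, dist a v ≤ bd prev l + bM prev l := by
  have hM := bM_nonneg prev l
  rcases ha with haW | haU
  · rw [bW, Set.mem_iUnion₂] at haW
    obtain ⟨v, hv, hav⟩ := haW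
    exact ⟨v, hv, by have := Metric.mem_ball.mp hav; linarith⟩
  · obtain ⟨U, ⟨⟨k, hk, hUk⟩, z, hzU, hzW⟩, haU⟩ := haU
    rw [bW, Set.mem_iUnion₂] at hzW
    obtain ⟨v, hv, hzv⟩ := hzW
    have h1 : dist a z ≤ (prev k).2.2 := Hm k hk i U hUk a haU z hzU
    have h2 : (prev k).2.2 ≤ bM prev l := le_bM prev l hk
    have h3 : dist z v < bd prev l := Metric.mem_ball.mp hzv
    exact ⟨v, hv, by have := dist_triangle a z v; linarith⟩

theorem build_mesh (h : AsdimLE n X)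
    (Hm : ∀ k < l, ∀ i : Fin (n + 1), ∀ U ∈ (prev k).1 i, ∀ x ∈ U, ∀ y ∈ U,
      dist x y ≤ (prev k).2.2) :
    ∀ i, ∀ A ∈ bfam h prev l i, ∀ x ∈ A, ∀ y ∈ A, dist x y ≤ bm h prev l := by
  rintro i A ⟨V, ⟨hV, -⟩, rfl⟩ x hx y hy
  obtain ⟨v₁, hv₁, h1⟩ := build_close prev l h Hm i V hx
  obtain ⟨v₂, hv₂, h2⟩ := build_close prev l h Hm i V hy
  have hm : dist v₁ v₂ ≤ meshOf n h (br prev l) :=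
    meshOf_spec n h (br_pos prev l) V (Set.mem_iUnion.mpr ⟨i, hV⟩) v₁ hv₁ v₂ hv₂
  have t : dist x y ≤ dist x v₁ + dist v₁ v₂ + dist v₂ y := dist_triangle4 x v₁ v₂ y
  have e : dist v₂ y = dist y v₂ := dist_comm _ _
  rw [bm]; linarith

theorem build_disj (h : AsdimLE n X)
    (Hm : ∀ k < l, ∀ i : Fin (n + 1), ∀ U ∈ (prev k).1 i, ∀ x ∈ U, ∀ y ∈ U,
      dist x y ≤ (prev k).2.2)
    (i : Fin (n + 1)) : RDisjoint (bd prev l) (bfam h prev l i) := by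
  rintro A ⟨V₁, ⟨hV₁, hV₁ne⟩, rfl⟩ B ⟨V₂, ⟨hV₂, hV₂ne⟩, rfl⟩ hne
  have hVne : V₁ ≠ V₂ := fun e => hne (by rw [e])
  have hdisj : br prev l < setDist V₁ V₂ :=
    (famOf_spec n h (br_pos prev l)).2.2 i V₁ hV₁ V₂ hV₂ hVne
  have key : bd prev l + 1 ≤ setDist (bF prev l i V₁) (bF prev l i V₂) := by
    apply le_setDist (hV₁ne.mono (subset_bF prev l i V₁))
      (hV₂ne.mono (subset_bF prev l i V₂))
    intro a ha b hb
    obtain ⟨v₁, hv₁, h1⟩ := build_close prev l h Hm i V₁ ha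
    obtain ⟨v₂, hv₂, h2⟩ := build_close prev l h Hm i V₂ hb
    have hs : setDist V₁ V₂ ≤ dist v₁ v₂ := setDist_le_dist hv₁ hv₂
    have t : dist v₁ v₂ ≤ dist v₁ a + dist a b + dist b v₂ := dist_triangle4 v₁ a b v₂
    have e1 : dist v₁ a = dist a v₁ := dist_comm _ _
    have e2 : dist b v₂ = dist v₂ b := dist_comm _ _
    have e3 : dist v₂ b = dist b v₂ := dist_comm _ _
    have hbr : br prev l = 3 * bd prev l + 2 * bM prev l + 1 := rfl
    have h2' : dist b v₂ ≤ bd prev l + bM prev l := h2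
    linarith
  linarith

end Build

section Congr

variable {X : Type*} [MetricSpace X] {n : ℕ}
variable {p q : ℕ → (Fin (n + 1) → Set (Set X)) × ℝ × ℝ} {l : ℕ}

theorem bM_congr (e : ∀ k < l, p k = q k) : bM p l = bM q l :=
  Finset.sum_congr rfl fun k hk => by rw [e k (Finset.mem_range.mp hk)]

theorem bD_congr (e : ∀ k < l, p k = q k) : bD p l = bD q l :=
  Finset.sum_congr rfl fun k hk => by rw [e k (Finset.mem_range.mp hk)]

theorem bd_congr (e : ∀ k < l, p k = q k) : bd p l = bd q l := by
  unfold bd; rw [bM_congr e, bD_congr e]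

theorem br_congr (e : ∀ k < l, p k = q k) : br p l = br q l := by
  unfold br; rw [bM_congr e, bd_congr e]

theorem bW_congr (e : ∀ k < l, p k = q k) (V : Set X) : bW p l V = bW q l V := by
  unfold bW; rw [bd_congr e]

theorem bF_congr (e : ∀ k < l, p k = q k) (i : Fin (n + 1)) (V : Set X) :
    bF p l i V = bF q l i V := by
  have hs : {U : Set X | (∃ k < l, U ∈ (p k).1 i) ∧ (U ∩ bW q l V).Nonempty} =
      {U : Set X | (∃ k < l, U ∈ (q k).1 i) ∧ (U ∩ bW q l V).Nonempty} := by
    ext U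
    simp only [Set.mem_setOf_eq]
    constructor
    · rintro ⟨⟨k, hk, hU⟩, hn⟩
      exact ⟨⟨k, hk, by rw [← e k hk]; exact hU⟩, hn⟩
    · rintro ⟨⟨k, hk, hU⟩, hn⟩
      exact ⟨⟨k, hk, by rw [e k hk]; exact hU⟩, hn⟩
  unfold bF
  rw [bW_congr e, hs]

theorem bfam_congr (h : AsdimLE n X) (e : ∀ k < l, p k = q k) (i : Fin (n + 1)) :
    bfam h p l i = bfam h q l i := by
  unfold bfam
  rw [br_congr e]
  exact Set.image_congr fun V _ => bF_congr e i V

theorem bm_congr (h : AsdimLE n X) (e : ∀ k < l, p k = q k) : bm h p l = bm h q l := by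
  unfold bm; rw [br_congr e, bd_congr e, bM_congr e]

theorem build_congr (h : AsdimLE n X) (e : ∀ k < l, p k = q k) :
    build h p l = build h q l := by
  unfold build
  rw [bd_congr e, bm_congr h e]
  congr 1
  funext i
  exact bfam_congr h e i

end Congr

noncomputable def seq (n : ℕ) {X : Type*} [MetricSpace X] (h : AsdimLE n X) :
    ℕ → (Fin (n + 1) → Set (Set X)) × ℝ × ℝ
  | l => build h (fun k => if hk : k < l then seq n h k else (fun _ => ∅, 0, 0)) l
  decreasing_by exact hk

theorem seq_eq (n : ℕ) {X : Type*} [MetricSpace X] (h : AsdimLE n X) (l : ℕ) :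
    seq n h l = build h (seq n h) l := by
  rw [seq]
  exact build_congr h fun k hk => dif_pos hk

/-- If `asdim(X, d) ≤ n`, then there exist a sequence of uniformly bounded coverings
`𝒰_k = ⋃ᵢ 𝒰_kⁱ` (with meshes `m_k`) and an increasing sequence of positive numbers `d_k`
such that: (1) each `𝒰_kⁱ` is `d_k`-disjoint; (2) the Lebesgue number of `𝒰_k` is at
least `d_k`; (3) `d_{k+1} > 2 m_k`; and (4) for all `i` and `k < l`, any member of `𝒰_kⁱ`
meeting a member of `𝒰_lⁱ` is contained in it. -/
theorem exists_sequence_of_coverings {X : Type*} [MetricSpace X] (n : ℕ)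
    (h : AsdimLE n X) :
    ∃ (𝒰 : ℕ → Fin (n + 1) → Set (Set X)) (d m : ℕ → ℝ),
      StrictMono d ∧ (∀ k, 0 < d k) ∧
      (∀ k, IsCover (⋃ i, 𝒰 k i)) ∧
      (∀ k i, RDisjoint (d k) (𝒰 k i)) ∧
      (∀ k, LebesgueGE (⋃ i, 𝒰 k i) (d k)) ∧
      (∀ k i, ∀ U ∈ 𝒰 k i, ∀ x ∈ U, ∀ y ∈ U, dist x y ≤ m k) ∧
      (∀ k, 2 * m k < d (k + 1)) ∧
      (∀ i k l, k < l → ∀ U ∈ 𝒰 k i, ∀ V ∈ 𝒰 l i, (U ∩ V).Nonempty → U ⊆ V) := by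
  classical
  have ed : ∀ l, (seq n h l).2.1 = bd (seq n h) l := fun l => by rw [seq_eq]; rfl
  have em : ∀ l, (seq n h l).2.2 = bm h (seq n h) l := fun l => by rw [seq_eq]; rfl
  have ef : ∀ l, (seq n h l).1 = bfam h (seq n h) l := fun l => by rw [seq_eq]; rfl
  have Gpos : ∀ l, 0 < (seq n h l).2.1 := fun l => (ed l) ▸ bd_pos (seq n h) l
  have Gm : ∀ l, ∀ i, ∀ U ∈ (seq n h l).1 i, ∀ x ∈ U, ∀ y ∈ U,
      dist x y ≤ (seq n h l).2.2 := by
    intro l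
    induction l using Nat.strong_induction_on with
    | _ l IH =>
      rw [ef l, em l]
      exact build_mesh (seq n h) l h (fun k hk => IH k hk)
  have Gd : ∀ l i, RDisjoint ((seq n h l).2.1) ((seq n h l).1 i) := by
    intro l i
    rw [ed l, ef l]
    exact build_disj (seq n h) l h (fun k _ => Gm k) i
  have Gleb : ∀ l, LebesgueGE (⋃ i, (seq n h l).1 i) ((seq n h l).2.1) := by
    intro l
    rw [ed l, ef l]
    exact build_lebesgue (seq n h) l h
  have Gnest : ∀ (i : Fin (n + 1)) l k, k < l → ∀ U ∈ (seq n h k).1 i,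
      ∀ V ∈ (seq n h l).1 i, (U ∩ V).Nonempty → U ⊆ V := by
    intro i l
    induction l using Nat.strong_induction_on with
    | _ l IH =>
      intro k hkl U hU V hV hUV
      rw [ef l] at hV
      obtain ⟨V₀, ⟨hV₀, hV₀ne⟩, rfl⟩ := hV
      obtain ⟨z, hzU, hzF⟩ := hUV
      rw [bF, Set.mem_union] at hzF
      rcases hzF with hzW | hzS
      · exact absorb_subset_bF (seq n h) l i V₀ U ⟨k, hkl, hU⟩ ⟨z, hzU, hzW⟩
      · obtain ⟨U₀, ⟨⟨k₀, hk₀, hU₀⟩, hint₀⟩, hzU₀⟩ := hzS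
        rcases lt_trichotomy k k₀ with hlt | heq | hgt
        · have hsub : U ⊆ U₀ := IH k₀ hk₀ k hlt U hU U₀ hU₀ ⟨z, hzU, hzU₀⟩
          exact hsub.trans
            (absorb_subset_bF (seq n h) l i V₀ U₀ ⟨k₀, hk₀, hU₀⟩ hint₀)
        · subst heq
          have hUeq : U = U₀ := by
            by_contra hne
            have h1 := Gd k i U hU U₀ hU₀ hne
            have h2 : setDist U U₀ ≤ 0 := by
              have h3 := setDist_le_dist hzU hzU₀
              simpa using h3
            have := Gpos k
            linarith
          rw [hUeq]
          exact absorb_subset_bF (seq n h) l i V₀ U₀ ⟨k, hkl, hUeq ▸ hU⟩ hint₀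
        · have hsub : U₀ ⊆ U := IH k hkl k₀ hgt U₀ hU₀ U hU ⟨z, hzU₀, hzU⟩
          obtain ⟨w, hwU₀, hwW⟩ := hint₀
          exact absorb_subset_bF (seq n h) l i V₀ U ⟨k, hkl, hU⟩ ⟨w, hsub hwU₀, hwW⟩
  refine ⟨fun k => (seq n h k).1, fun k => (seq n h k).2.1, fun k => (seq n h k).2.2,
    ?_, Gpos, ?_, Gd, Gleb, Gm, ?_, fun i k l hkl => Gnest i l k hkl⟩
  · apply strictMono_nat_of_lt_succ
    intro l
    show (seq n h l).2.1 < (seq n h (l + 1)).2.1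
    have h1 : (seq n h l).2.1 ≤ bD (seq n h) (l + 1) :=
      le_bD (seq n h) (l + 1) (Nat.lt_succ_self l)
    have h2 := bM_nonneg (seq n h) (l + 1)
    rw [ed (l + 1)]
    unfold bd
    linarith
  · intro k x
    obtain ⟨U, hU, hsub⟩ := Gleb k x
    exact ⟨U, hU, hsub (Metric.mem_ball_self (Gpos k))⟩
  · intro k
    show 2 * (seq n h k).2.2 < (seq n h (k + 1)).2.1
    have h1 : (seq n h k).2.2 ≤ bM (seq n h) (k + 1) :=
      le_bM (seq n h) (k + 1) (Nat.lt_succ_self k)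
    have h2 := bD_nonneg (seq n h) (k + 1)
    rw [ed (k + 1)]
    unfold bd
    linarith
end

section
/- Let (X, d) be a metric space and let {𝒰_k}_{k=1}^∞ be a sequence of coverings of X and {d_k}_{k=1}^∞ an increasing sequence of positive reals such that each 𝒰_k is uniformly bounded with mesh m_k, the Lebesgue number of 𝒰_k is at least d_k, and d_{k+1} > 2·m_k for all k. Define D(x, y) = min{k : there exists U ∈ 𝒰_k with x, y ∈ U} for x ≠ y and D(x, x) = 0. Then for every x, y, z ∈ X one has D(x, y) ≤ max{D(x, z), D(y, z)} + 1. -/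
/-- Given a sequence of coverings `𝒰_k` of a metric space `X` with meshes `m_k` and an
increasing sequence of positive reals `d_k` such that the Lebesgue number of `𝒰_k` is at
least `d_k` and `d_{k+1} > 2 m_k`, the function
`D(x, y) = min {k : ∃ U ∈ 𝒰_k, x, y ∈ U}` (for `x ≠ y`, with `D(x, x) = 0`)
satisfies `D(x, y) ≤ max (D(x, z)) (D(y, z)) + 1` for all `x, y, z`. -/
theorem D_almost_ultrametric {X : Type*} [MetricSpace X]
    (𝒰 : ℕ → Set (Set X)) (d m : ℕ → ℝ)
    (hcov : ∀ k, IsCover (𝒰 k))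
    (hd : StrictMono d) (hdpos : ∀ k, 0 < d k)
    (hm : ∀ k, ∀ U ∈ 𝒰 k, ∀ x ∈ U, ∀ y ∈ U, dist x y ≤ m k)
    (hL : ∀ k, LebesgueGE (𝒰 k) (d k))
    (hdm : ∀ k, 2 * m k < d (k + 1))
    (D : X → X → ℕ)
    (hD : ∀ x y : X, x ≠ y → IsLeast {k : ℕ | ∃ U ∈ 𝒰 k, x ∈ U ∧ y ∈ U} (D x y))
    (hD0 : ∀ x : X, D x x = 0) :
    ∀ x y z : X, D x y ≤ max (D x z) (D y z) + 1 := by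
  intro x y z
  rcases eq_or_ne x y with rfl | hxy
  · simp [hD0]
  set k := max (D x z) (D y z) with hk
  -- key: any point w with D w z ≤ k satisfies dist w z < d (k+1)
  have key : ∀ w : X, D w z ≤ k → dist w z < d (k + 1) := by
    intro w hw
    rcases eq_or_ne w z with rfl | hwz
    · simpa using hdpos (k + 1)
    · obtain ⟨⟨U, hU, hwU, hzU⟩, -⟩ := hD w z hwz
      have h1 : dist w z ≤ m (D w z) := hm _ U hU w hwU z hzU
      have h2 : 2 * m (D w z) < d (D w z + 1) := hdm _
      have h3 : d (D w z + 1) ≤ d (k + 1) := hd.monotone (by omega)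
      have h0 : 0 ≤ dist w z := dist_nonneg
      linarith
  obtain ⟨U, hU, hball⟩ := hL (k + 1) z
  have hxU : x ∈ U := hball (by
    simpa [Metric.mem_ball] using key x (le_max_left _ _))
  have hyU : y ∈ U := hball (by
    simpa [Metric.mem_ball] using key y (le_max_right _ _))
  exact (hD x y hxy).2 ⟨U, hU, hxU, hyU⟩
end

section
/- Let (X, d) be a metric space and let {𝒰_k}_{k=1}^∞ be a sequence of coverings of X, where each 𝒰_k splits as 𝒰_k = ⋃_{i=1}^{n+1} 𝒰_k^i, satisfying: for every i and every k < l, if U ∈ 𝒰_k^i, V ∈ 𝒰_l^i and U ∩ V ≠ ∅, then U ⊆ V; and for each k the members of 𝒰_k^i containing any fixed point form a chain under inclusion (in particular this holds when each 𝒰_k^i is a disjoint family). Define D(x, y) = min{k : there exists U ∈ 𝒰_k with x, y ∈ U} for x ≠ y and D(x, x) = 0, and assume D(x, y) is finite for all x, y. Then for every x, y_1, …, y_{n+2} ∈ X there exist i ≠ j in {1, …, n+2} such that D(y_i, y_j) ≤ D(x, y_i); that is, (X, D) satisfies property (N2)_n. -/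
/-- Let `𝒰_k = ⋃ᵢ 𝒰_kⁱ` (`i` ranging over `n + 1` values) be a sequence of coverings of a
metric space `X` such that: for every `i` and `k < l`, any member of `𝒰_kⁱ` meeting a
member of `𝒰_lⁱ` is contained in it; and for each `k` and `i` the members of `𝒰_kⁱ`
containing any fixed point form a chain under inclusion. Let
`D(x, y) = min {k : ∃ i, ∃ U ∈ 𝒰_kⁱ, x, y ∈ U}` for `x ≠ y` (assumed to exist, i.e. `D`
is finite) and `D(x, x) = 0`. Then `(X, D)` satisfies property `(N2)_n`: for all
`x, y₁, …, y_{n+2}` there are `i ≠ j` with `D(yᵢ, yⱼ) ≤ D(x, yᵢ)`. -/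
theorem D_satisfies_N2 {X : Type*} [MetricSpace X] (n : ℕ)
    (𝒰 : ℕ → Fin (n + 1) → Set (Set X))
    (hcov : ∀ k, IsCover (⋃ i, 𝒰 k i))
    (hnest : ∀ (i : Fin (n + 1)) (k l : ℕ), k < l →
      ∀ U ∈ 𝒰 k i, ∀ V ∈ 𝒰 l i, (U ∩ V).Nonempty → U ⊆ V)
    (hchain : ∀ (k : ℕ) (i : Fin (n + 1)) (x : X), ∀ U ∈ 𝒰 k i, ∀ V ∈ 𝒰 k i,
      x ∈ U → x ∈ V → U ⊆ V ∨ V ⊆ U)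
    (D : X → X → ℕ)
    (hD : ∀ x y : X, x ≠ y →
      IsLeast {k : ℕ | ∃ i : Fin (n + 1), ∃ U ∈ 𝒰 k i, x ∈ U ∧ y ∈ U} (D x y))
    (hD0 : ∀ x : X, D x x = 0) :
    ∀ (x : X) (y : Fin (n + 2) → X),
      ∃ i j : Fin (n + 2), i ≠ j ∧ D (y i) (y j) ≤ D x (y i) := by
  intro x y
  by_cases heq : ∃ a b : Fin (n + 2), a ≠ b ∧ y a = y b
  · obtain ⟨a, b, hab, he⟩ := heq
    exact ⟨a, b, hab, by simp [he, hD0]⟩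
  push_neg at heq
  by_cases hx : ∃ a, x = y a
  · obtain ⟨a, ha⟩ := hx
    obtain ⟨b, hb⟩ := exists_ne a
    have hne : y b ≠ y a := heq b a hb
    have h1 := hD (y b) (y a) hne
    have h2 := hD (y a) (y b) hne.symm
    have hset : {k : ℕ | ∃ i : Fin (n + 1), ∃ U ∈ 𝒰 k i, y b ∈ U ∧ y a ∈ U}
        = {k : ℕ | ∃ i : Fin (n + 1), ∃ U ∈ 𝒰 k i, y a ∈ U ∧ y b ∈ U} := by
      ext k
      constructor <;> rintro ⟨i, U, hU, h1, h2⟩ <;> exact ⟨i, U, hU, h2, h1⟩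
    rw [hset] at h1
    have := h1.unique h2
    exact ⟨b, a, hb, by rw [ha]; exact le_of_eq this⟩
  push_neg at hx
  have h1 : ∀ a, ∃ i : Fin (n + 1), ∃ U ∈ 𝒰 (D x (y a)) i, x ∈ U ∧ y a ∈ U :=
    fun a => (hD x (y a) (hx a)).1
  choose c U hU hxU hyU using h1
  obtain ⟨a, b, hab, hc⟩ := Fintype.exists_ne_map_eq_of_card_lt c (by simp)
  have key : ∀ a b : Fin (n + 2), a ≠ b → y a ∈ U b → D (y b) (y a) ≤ D x (y b) :=
    fun a b hab hm =>
      (hD (y b) (y a) (heq b a hab.symm)).2 ⟨c b, U b, hU b, hyU b, hm⟩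
  rcases lt_trichotomy (D x (y a)) (D x (y b)) with h | h | h
  · have hsub : U a ⊆ U b :=
      hnest (c a) _ _ h (U a) (hU a) (U b) (hc ▸ hU b) ⟨x, hxU a, hxU b⟩
    exact ⟨b, a, hab.symm, key a b hab (hsub (hyU a))⟩
  · have hUb : U b ∈ 𝒰 (D x (y a)) (c a) := by rw [h, hc]; exact hU b
    rcases hchain _ (c a) x (U a) (hU a) (U b) hUb (hxU a) (hxU b) with hs | hs
    · exact ⟨b, a, hab.symm, key a b hab (hs (hyU a))⟩
    · exact ⟨a, b, hab, key b a hab.symm (hs (hyU b))⟩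
  · have hsub : U b ⊆ U a :=
      hnest (c b) _ _ h (U b) (hU b) (U a) (hc ▸ hU a) ⟨x, hxU b, hxU a⟩
    exact ⟨a, b, hab, key b a hab.symm (hsub (hyU b))⟩
end
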